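/- Let X₀, X₁, X₂ be independent integrable random vectors in ℝ^d on a probability space, and set Z₁ := X₀ + X₁, Z₂ := X₀ + X₂. Let φ₁(ω) := E[e^{i ω·X₁}] and ψ(ω₁, ω₂) := E[e^{i ω₁·Z₁ + i ω₂·Z₂}]. If ψ is nowhere vanishing, then for every ω ∈ ℝ^d: φ₁(ω) = exp( −i ω·E[X₀] + ∫₀¹ (∇₁ψ(αω, −αω) / ψ(αω, −αω)) · ω dα ), where ∇₁ denotes the gradient with respect to the first argument. -/

import Mathlib

/-!
By independence, `ψ (w, c) = φ₀ (w + c) * φ₁ w * φ₂ c`, where `φₖ` is the characteristic function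
of `Xₖ`. Differentiating in `w` at `(αω, -αω)`, where the `φ₀` factor sits at `0`, gives
`(∇₁ψ / ψ) · ω = ∇φ₀(0) · ω + ∇φ₁(αω) · ω / φ₁(αω) = i ω·E[X₀] + h' α / h α` for `h α = φ₁ (α • ω)`.
For a nonvanishing `C¹` path `h`, `exp (-∫₀ᵗ h'/h) * h t` has derivative zero, so
`exp (∫₀¹ h'/h) = h 1 / h 0 = φ₁ ω`.
-/

open MeasureTheory Complex ProbabilityTheory

noncomputable section

/-- Gradient of a `ℂ`-valued function on `ℝ^d` (equals `∇Re ξ + i ∇Im ξ` componentwise). -/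
def grad {d : ℕ} (ξ : (Fin d → ℝ) → ℂ) (ω : Fin d → ℝ) : Fin d → ℂ :=
  fun j => fderiv ℝ ξ ω (Pi.single j 1)

/-- Dot product `u·v` of a real vector with a complex vector. -/
def rcDot {d : ℕ} (u : Fin d → ℝ) (v : Fin d → ℂ) : ℂ :=
  ∑ j, (u j : ℂ) * v j

section CharFunVec

variable {ι Ω : Type*} [Fintype ι] [MeasurableSpace Ω] {μ : Measure Ω}

def dotProductCLM : (ι → ℝ) →L[ℝ] (ι → ℝ) →L[ℝ] ℝ :=
  LinearMap.toContinuousLinearMap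
    (LinearMap.toContinuousLinearMap.toLinearMap ∘ₗ (dotProductBilin ℝ ℝ).flip)

@[simp]
lemma dotProductCLM_apply (y v : ι → ℝ) : dotProductCLM y v = v ⬝ᵥ y := rfl

def charFunVec (μ : Measure Ω) (Y : Ω → ι → ℝ) (w : ι → ℝ) : ℂ :=
  ∫ a, cexp (I * ((w ⬝ᵥ Y a : ℝ) : ℂ)) ∂μ

lemma charFunVec_zero [IsProbabilityMeasure μ] (Y : Ω → ι → ℝ) : charFunVec μ Y 0 = 1 := by
  simp [charFunVec]

def cexpDotDeriv (w y : ι → ℝ) : (ι → ℝ) →L[ℝ] ℂ :=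
  cexp (I * ((w ⬝ᵥ y : ℝ) : ℂ)) • I • ofRealCLM ∘L dotProductCLM y

lemma hasFDerivAt_cexp_I_mul_dotProduct (y w : ι → ℝ) :
    HasFDerivAt (fun w => cexp (I * ((w ⬝ᵥ y : ℝ) : ℂ))) (cexpDotDeriv w y) w :=
  ((ofRealCLM.hasFDerivAt.comp w (dotProductCLM y).hasFDerivAt).const_mul I).cexp

lemma continuous_cexp_I_mul_dotProduct (w : ι → ℝ) :
    Continuous fun y : ι → ℝ => cexp (I * ((w ⬝ᵥ y : ℝ) : ℂ)) :=
  continuous_exp.comp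
    (continuous_const.mul (continuous_ofReal.comp (continuous_const.dotProduct continuous_id)))

lemma norm_cexpDotDeriv (w y : ι → ℝ) : ‖cexpDotDeriv w y‖ = ‖dotProductCLM y‖ := by
  rw [cexpDotDeriv, norm_smul, norm_smul, norm_exp_I_mul_ofReal, norm_I, one_mul, one_mul]
  exact ofRealLI.norm_toContinuousLinearMap_comp

lemma continuous_cexpDotDeriv :
    Continuous fun p : (ι → ℝ) × (ι → ℝ) => cexpDotDeriv p.1 p.2 := by
  have : Continuous fun p : (ι → ℝ) × (ι → ℝ) => p.1 ⬝ᵥ p.2 :=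
    continuous_fst.dotProduct continuous_snd
  unfold cexpDotDeriv
  fun_prop

variable {Y : Ω → ι → ℝ}

lemma integrable_cexpDotDeriv (hY : Integrable Y μ) (w : ι → ℝ) :
    Integrable (fun a => cexpDotDeriv w (Y a)) μ :=
  (ContinuousLinearMap.integrable_comp (dotProductCLM (ι := ι)) hY).norm.mono'
    ((continuous_cexpDotDeriv.comp (Continuous.prodMk_right w)).comp_aestronglyMeasurable hY.1)
    (.of_forall fun _ => (norm_cexpDotDeriv _ _).le)

lemma ProbabilityTheory.iIndepFun.integral_cexp_sum_dotProduct {κ : Type*} [Fintype κ]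
    {X : κ → Ω → ι → ℝ} (hX : iIndepFun X μ) (hXm : ∀ k, AEMeasurable (X k) μ)
    (c : κ → ι → ℝ) :
    ∫ a, cexp (I * ((∑ k, c k ⬝ᵥ X k a : ℝ) : ℂ)) ∂μ = ∏ k, charFunVec μ (X k) (c k) := by
  simp_rw [ofReal_sum, Finset.mul_sum, Complex.exp_sum]
  exact hX.integral_fun_prod_comp hXm fun k =>
    (continuous_cexp_I_mul_dotProduct (c k)).aestronglyMeasurable

variable [IsFiniteMeasure μ]

lemma hasFDerivAt_charFunVec (hY : Integrable Y μ) (w : ι → ℝ) :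
    HasFDerivAt (charFunVec μ Y) (∫ a, cexpDotDeriv w (Y a) ∂μ) w := by
  have hmeas : ∀ w : ι → ℝ, AEStronglyMeasurable (fun a => cexp (I * ((w ⬝ᵥ Y a : ℝ) : ℂ))) μ :=
    fun w => (continuous_cexp_I_mul_dotProduct w).comp_aestronglyMeasurable hY.1
  exact hasFDerivAt_integral_of_dominated_of_fderiv_le Filter.univ_mem (.of_forall hmeas)
    ((integrable_const (1 : ℝ)).mono' (hmeas w) (.of_forall fun _ => (norm_exp_I_mul_ofReal _).le))
    (integrable_cexpDotDeriv hY w).aestronglyMeasurable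
    (.of_forall fun _ _ _ => (norm_cexpDotDeriv _ _).le)
    (ContinuousLinearMap.integrable_comp (dotProductCLM (ι := ι)) hY).norm
    (.of_forall fun a x _ => hasFDerivAt_cexp_I_mul_dotProduct (Y a) x)

lemma contDiff_one_charFunVec (hY : Integrable Y μ) : ContDiff ℝ 1 (charFunVec μ Y) := by
  refine contDiff_one_iff_fderiv.2 ⟨fun w => (hasFDerivAt_charFunVec hY w).differentiableAt, ?_⟩
  rw [funext fun w => (hasFDerivAt_charFunVec hY w).fderiv]
  exact continuous_of_dominated (fun w => (integrable_cexpDotDeriv hY w).aestronglyMeasurable)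
    (fun _ => .of_forall fun _ => (norm_cexpDotDeriv _ _).le)
    (ContinuousLinearMap.integrable_comp (dotProductCLM (ι := ι)) hY).norm
    (.of_forall fun a => (continuous_cexpDotDeriv (ι := ι)).comp (Continuous.prodMk_left (Y a)))

lemma fderiv_charFunVec_zero_apply (hY : Integrable Y μ) (v : ι → ℝ) :
    fderiv ℝ (charFunVec μ Y) 0 v = I * ((v ⬝ᵥ ∫ a, Y a ∂μ : ℝ) : ℂ) := by
  have hmean : ∫ a, v ⬝ᵥ Y a ∂μ = v ⬝ᵥ ∫ a, Y a ∂μ := by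
    simpa [dotProduct_comm v] using (dotProductCLM v).integral_comp_comm hY
  rw [(hasFDerivAt_charFunVec hY 0).fderiv,
    ContinuousLinearMap.integral_apply (integrable_cexpDotDeriv hY 0)]
  simp only [cexpDotDeriv, zero_dotProduct, ofReal_zero, mul_zero, Complex.exp_zero, one_smul,
    smul_apply, ContinuousLinearMap.comp_apply, dotProductCLM_apply, ofRealCLM_apply, smul_eq_mul]
  rw [integral_const_mul, integral_complex_ofReal, hmean]

end CharFunVec

lemma intervalIntegral.cexp_integral_div_eq_div {f f' : ℝ → ℂ} (hf : ∀ t, HasDerivAt f (f' t) t)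
    (hf' : Continuous f') (hne : ∀ t, f t ≠ 0) (a b : ℝ) :
    cexp (∫ t in a..b, f' t / f t) = f b / f a := by
  have hcont : Continuous fun t => f' t / f t :=
    hf'.div (continuous_iff_continuousAt.2 fun t => (hf t).continuousAt) hne
  set G : ℝ → ℂ := fun t => ∫ s in a..t, f' s / f s
  have hG : ∀ t, HasDerivAt G (f' t / f t) t := fun t =>
    intervalIntegral.integral_hasDerivAt_right (hcont.intervalIntegrable _ _)
      hcont.stronglyMeasurable.stronglyMeasurableAtFilter hcont.continuousAt
  have hderiv : ∀ t, HasDerivAt (fun t => cexp (-G t) * f t) 0 t := fun t => by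
    have h := (hG t).neg.cexp.mul (hf t)
    rwa [Pi.neg_apply, mul_assoc, neg_mul, div_mul_cancel₀ _ (hne t), mul_neg, neg_add_cancel] at h
  have hconst := is_const_of_deriv_eq_zero (fun t => (hderiv t).differentiableAt)
    (fun t => (hderiv t).deriv) b a
  simp only [G, intervalIntegral.integral_same, neg_zero, Complex.exp_zero, one_mul] at hconst
  rw [eq_div_iff (hne a), ← hconst, ← mul_assoc, ← Complex.exp_add, add_neg_cancel,
    Complex.exp_zero, one_mul]

section Gradient

variable {d : ℕ}

lemma rcDot_grad (ξ : (Fin d → ℝ) → ℂ) (p ω : Fin d → ℝ) :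
    rcDot ω (grad ξ p) = fderiv ℝ ξ p ω := by
  conv_rhs => rw [← Finset.univ_sum_single ω]
  simp only [rcDot, grad, map_sum]
  refine Finset.sum_congr rfl fun j _ => ?_
  have hsingle : Pi.single j (ω j) = ω j • (Pi.single j 1 : Fin d → ℝ) := by
    rw [← Pi.single_smul', smul_eq_mul, mul_one]
  rw [hsingle, map_smul, Complex.real_smul]

lemma rcDot_div (ω : Fin d → ℝ) (v : Fin d → ℂ) (z : ℂ) :
    rcDot ω (fun j => v j / z) = rcDot ω v / z := by
  simp only [rcDot, mul_div_assoc', Finset.sum_div]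

end Gradient

section Kotlarski

variable {d : ℕ} {χ₀ χ₁ χ₂ : (Fin d → ℝ) → ℂ} {ψ : (Fin d → ℝ) → (Fin d → ℝ) → ℂ}

lemma rcDot_grad_div_of_factorization (hψ : ∀ w c, ψ w c = χ₀ (w + c) * χ₁ w * χ₂ c)
    (hχ₀ : DifferentiableAt ℝ χ₀ 0) (hχ₀0 : χ₀ 0 = 1) {p : Fin d → ℝ}
    (hχ₁ : DifferentiableAt ℝ χ₁ p) (hχ₁p : χ₁ p ≠ 0) (hχ₂p : χ₂ (-p) ≠ 0) (ω : Fin d → ℝ) :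
    rcDot ω (fun j => grad (fun w => ψ w (-p)) p j / ψ p (-p)) =
      fderiv ℝ χ₀ 0 ω + fderiv ℝ χ₁ p ω / χ₁ p := by
  have hshift : HasFDerivAt (fun w => χ₀ (w + -p)) (fderiv ℝ χ₀ 0) p := by
    have h0 : HasFDerivAt χ₀ (fderiv ℝ χ₀ 0) (p + -p) := by
      rw [add_neg_cancel]
      exact hχ₀.hasFDerivAt
    simpa [Function.comp_def] using h0.comp p ((hasFDerivAt_id p).add_const (-p))
  have hderiv : HasFDerivAt (fun w => ψ w (-p))
      (χ₂ (-p) • (χ₀ (p + -p) • fderiv ℝ χ₁ p + χ₁ p • fderiv ℝ χ₀ 0)) p := by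
    simp_rw [hψ, mul_comm _ (χ₂ (-p))]
    exact (hshift.mul hχ₁.hasFDerivAt).const_mul (χ₂ (-p))
  rw [rcDot_div, rcDot_grad, hderiv.fderiv, hψ, add_neg_cancel, hχ₀0]
  simp only [add_apply, smul_apply, smul_eq_mul, one_mul]
  field_simp
  ring

theorem eq_cexp_integral_rcDot_grad_div_of_factorization
    (hψ : ∀ w c, ψ w c = χ₀ (w + c) * χ₁ w * χ₂ c) (hψne : ∀ w c, ψ w c ≠ 0)
    (hχ₀ : DifferentiableAt ℝ χ₀ 0) (hχ₀0 : χ₀ 0 = 1) (hχ₁ : ContDiff ℝ 1 χ₁) (hχ₁0 : χ₁ 0 = 1)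
    (ω : Fin d → ℝ) :
    χ₁ ω = cexp (-fderiv ℝ χ₀ 0 ω + ∫ α in (0 : ℝ)..1,
      rcDot ω (fun j => grad (fun w => ψ w (-(α • ω))) (α • ω) j / ψ (α • ω) (-(α • ω)))) := by
  have hne : ∀ p, χ₁ p ≠ 0 ∧ χ₂ (-p) ≠ 0 := fun p => by
    have h := hψne p (-p)
    rw [hψ] at h
    exact ⟨right_ne_zero_of_mul (left_ne_zero_of_mul h), right_ne_zero_of_mul h⟩
  have hdiff : Differentiable ℝ χ₁ := hχ₁.differentiable one_ne_zero
  have hline : ∀ α : ℝ, HasDerivAt (fun α : ℝ => χ₁ (α • ω)) (fderiv ℝ χ₁ (α • ω) ω) α :=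
    fun α => by
      have hsmul : HasDerivAt (fun α : ℝ => α • ω) ω α := by
        simpa using (hasDerivAt_id α).smul_const ω
      exact (hdiff _).hasFDerivAt.comp_hasDerivAt α hsmul
  have hcont : Continuous fun α : ℝ => fderiv ℝ χ₁ (α • ω) ω :=
    ((hχ₁.continuous_fderiv one_ne_zero).comp (continuous_id.smul continuous_const)).clm_apply
      continuous_const
  have hcont' : Continuous fun α : ℝ => fderiv ℝ χ₁ (α • ω) ω / χ₁ (α • ω) :=
    hcont.div (hχ₁.continuous.comp (continuous_id.smul continuous_const)) fun α => (hne _).1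
  rw [intervalIntegral.integral_congr fun α _ =>
      rcDot_grad_div_of_factorization hψ hχ₀ hχ₀0 (hdiff _) (hne _).1 (hne _).2 ω,
    intervalIntegral.integral_add intervalIntegrable_const (hcont'.intervalIntegrable _ _),
    intervalIntegral.integral_const, sub_zero, one_smul, neg_add_cancel_left,
    intervalIntegral.cexp_integral_div_eq_div hline hcont fun α => (hne _).1]
  simp [hχ₁0]

end Kotlarski

theorem multivariate_kotlarski_noise_general
    (d : ℕ)
    (Ω : Type*) [MeasurableSpace Ω] (μ : Measure Ω) [IsProbabilityMeasure μ]
    (X₀ X₁ X₂ : Ω → Fin d → ℝ)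
    (hindep : iIndepFun ![X₀, X₁, X₂] μ)
    (hint₀ : Integrable X₀ μ) (hint₁ : Integrable X₁ μ) (hint₂ : Integrable X₂ μ)
    (φ₁ : (Fin d → ℝ) → ℂ)
    (hφ₁ : ∀ ω : Fin d → ℝ,
      φ₁ ω = ∫ a, Complex.exp (Complex.I * ((∑ j, ω j * X₁ a j : ℝ) : ℂ)) ∂μ)
    (ψ : (Fin d → ℝ) → (Fin d → ℝ) → ℂ)
    (hψ : ∀ ω₁ ω₂ : Fin d → ℝ,
      ψ ω₁ ω₂ = ∫ a, Complex.exp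
        (Complex.I * ((∑ j, ω₁ j * (X₀ a j + X₁ a j) : ℝ) : ℂ) +
         Complex.I * ((∑ j, ω₂ j * (X₀ a j + X₂ a j) : ℝ) : ℂ)) ∂μ)
    (hψne : ∀ ω₁ ω₂ : Fin d → ℝ, ψ ω₁ ω₂ ≠ 0) :
    ∀ ω : Fin d → ℝ,
      φ₁ ω = Complex.exp
        (-Complex.I * ((∑ j, ω j * (∫ a, X₀ a j ∂μ) : ℝ) : ℂ) +
          ∫ α in (0:ℝ)..1,
            rcDot ω (fun j =>
              grad (fun w => ψ w (-(α • ω))) (α • ω) j / ψ (α • ω) (-(α • ω)))) := by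
  intro ω
  have hXm : ∀ k, AEMeasurable (![X₀, X₁, X₂] k) μ := fun k => by
    fin_cases k
    exacts [hint₀.aemeasurable, hint₁.aemeasurable, hint₂.aemeasurable]
  have hfact : ∀ w c,
      ψ w c = charFunVec μ X₀ (w + c) * charFunVec μ X₁ w * charFunVec μ X₂ c := fun w c => by
    have h := hindep.integral_cexp_sum_dotProduct hXm ![w + c, w, c]
    simp only [Fin.sum_univ_three, Fin.prod_univ_three, Matrix.cons_val_zero, Matrix.cons_val_one,
      Matrix.cons_val_two, Matrix.tail_cons, Matrix.head_cons] at h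
    rw [hψ, ← h]
    congr! 2 with a
    rw [← mul_add, ← ofReal_add]
    congr 3
    simp only [dotProduct, Pi.add_apply, mul_add, add_mul, Finset.sum_add_distrib]
    ring
  have hmean : ∫ a, X₀ a ∂μ = fun j => ∫ a, X₀ a j ∂μ := funext (eval_integral hint₀.eval)
  rw [hφ₁]
  change charFunVec μ X₁ ω = _
  rw [eq_cexp_integral_rcDot_grad_div_of_factorization hfact hψne
    ((contDiff_one_charFunVec hint₀).differentiable one_ne_zero 0) (charFunVec_zero X₀)
    (contDiff_one_charFunVec hint₁) (charFunVec_zero X₁) ω, fderiv_charFunVec_zero_apply hint₀,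
    hmean, neg_mul]
  rfl

/-- **Multivariate Kotlarski formula for the noise characteristic function.**
Let `X₀, X₁, X₂` be independent integrable random vectors in `ℝ^d`, `Z₁ = X₀ + X₁`,
`Z₂ = X₀ + X₂`, `φ₁(ω) = E[e^{iω·X₁}]`, `ψ(ω₁,ω₂) = E[e^{iω₁·Z₁ + iω₂·Z₂}]`.
If `ψ` is nowhere vanishing then
`φ₁(ω) = exp (-i ω·E[X₀] + ∫₀¹ (∇₁ψ(αω,-αω)/ψ(αω,-αω)) · ω dα)`. -/
theorem multivariate_kotlarski_noise
    (d : ℕ)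
    (Ω : Type*) [MeasurableSpace Ω] (μ : Measure Ω) [IsProbabilityMeasure μ]
    (X₀ X₁ X₂ : Ω → Fin d → ℝ)
    (hX₀ : Measurable X₀) (hX₁ : Measurable X₁) (hX₂ : Measurable X₂)
    (hindep : iIndepFun ![X₀, X₁, X₂] μ)
    (hint₀ : Integrable X₀ μ) (hint₁ : Integrable X₁ μ) (hint₂ : Integrable X₂ μ)
    (φ₁ : (Fin d → ℝ) → ℂ)
    (hφ₁ : ∀ ω : Fin d → ℝ,
      φ₁ ω = ∫ a, Complex.exp (Complex.I * ((∑ j, ω j * X₁ a j : ℝ) : ℂ)) ∂μ)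
    (ψ : (Fin d → ℝ) → (Fin d → ℝ) → ℂ)
    (hψ : ∀ ω₁ ω₂ : Fin d → ℝ,
      ψ ω₁ ω₂ = ∫ a, Complex.exp
        (Complex.I * ((∑ j, ω₁ j * (X₀ a j + X₁ a j) : ℝ) : ℂ) +
         Complex.I * ((∑ j, ω₂ j * (X₀ a j + X₂ a j) : ℝ) : ℂ)) ∂μ)
    (hψne : ∀ ω₁ ω₂ : Fin d → ℝ, ψ ω₁ ω₂ ≠ 0) :
    ∀ ω : Fin d → ℝ,
      φ₁ ω = Complex.exp
        (-Complex.I * ((∑ j, ω j * (∫ a, X₀ a j ∂μ) : ℝ) : ℂ) +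
          ∫ α in (0:ℝ)..1,
            rcDot ω (fun j =>
              grad (fun w => ψ w (-(α • ω))) (α • ω) j / ψ (α • ω) (-(α • ω)))) :=
  multivariate_kotlarski_noise_general d Ω μ X₀ X₁ X₂ hindep hint₀ hint₁ hint₂ φ₁ hφ₁ ψ hψ hψne
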